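/- arXiv:0904.0315 — 2 statements merged into one kernel-verified Lean document; each statement's English description precedes it below -/
import Mathlib

section
/- Assume α > 0 and −α < m < 0. Let a ≥ 0, b ≥ 0 and d ∈ ℝ with |d|^{n−1}·d > −α·a·b, and let f : ℝ → ℝ solve the power-law ODE on [0,T) (0 < T ≤ ∞) with f(0) = a, f'(0) = b, f''(0) = d. Then f(t) > 0 and f'(t) > 0 for all t ∈ (0,T), and both f' and f'' are bounded on [0,T). -/
/-!
The flux `φ = |f''|^(n-1) f'' + α f f'` satisfies `φ' = (m + α) f'² ≥ 0`, so `φ > 0` on `[0, T)`.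
At a zero of `f'` this says `f'' > 0`, so `f'` never crosses zero downwards: `f' ≥ 0`, and
`f' > 0`, `f > 0` for `t > 0`. The energy `E = (n/(n+1)) |f''|^(n+1) - (m/3) f'³` satisfies
`E' = -α f f''² ≤ 0`. As `m < 0` and `f' ≥ 0`, both terms of `E` are nonnegative, hence bounded
by `E(0)`, which bounds `f'` and `f''`.
-/

open Real Set Filter Topology

/-- The signed power nonlinearity `x ↦ |x|^(n-1) * x`. -/
noncomputable def powLaw (n x : ℝ) : ℝ := |x| ^ (n - 1) * x

/-- `f` solves the power-law ODE `(|f''|^(n-1) f'')' + α f f'' - m (f')² = 0` on `I`: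
`f` is twice continuously differentiable on `I`, `t ↦ |f''(t)|^(n-1) f''(t)` is
differentiable on `I`, and the equation holds on `I`. -/
def SolvesPowerLawODE (n α m : ℝ) (f : ℝ → ℝ) (I : Set ℝ) : Prop :=
  (∀ t ∈ I, DifferentiableAt ℝ f t) ∧
  (∀ t ∈ I, DifferentiableAt ℝ (deriv f) t) ∧
  ContinuousOn (deriv (deriv f)) I ∧
  (∀ t ∈ I, DifferentiableAt ℝ (fun s => powLaw n (deriv (deriv f) s)) t) ∧
  (∀ t ∈ I, deriv (fun s => powLaw n (deriv (deriv f) s)) t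
      + α * f t * deriv (deriv f) t - m * (deriv f t) ^ 2 = 0)

lemma powLaw_pos_iff {n x : ℝ} : 0 < powLaw n x ↔ 0 < x :=
  ⟨fun h => by
    by_contra hx
    exact h.not_ge (mul_nonpos_of_nonneg_of_nonpos (rpow_nonneg (abs_nonneg x) _) (not_lt.1 hx)),
  fun hx => mul_pos (rpow_pos_of_pos (abs_pos.2 hx.ne') _) hx⟩

lemma abs_powLaw {n : ℝ} (hn : n ≠ 0) (x : ℝ) : |powLaw n x| = |x| ^ n := by
  rw [powLaw, abs_mul, abs_of_nonneg (rpow_nonneg (abs_nonneg x) _),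
    ← rpow_add_one' (abs_nonneg x) (by simpa using hn), sub_add_cancel]

lemma powLaw_inv_powLaw {n : ℝ} (hn : n ≠ 0) (x : ℝ) : powLaw n⁻¹ (powLaw n x) = x := by
  rcases eq_or_ne x 0 with rfl | hx
  · simp [powLaw]
  have hexp : n * (n⁻¹ - 1) + (n - 1) = 0 := by field_simp; ring
  rw [powLaw, abs_powLaw hn, ← rpow_mul (abs_nonneg x), powLaw, ← mul_assoc,
    ← rpow_add (abs_pos.2 hx), hexp, rpow_zero, one_mul]

lemma le_max_one_of_rpow_le {x q C : ℝ} (hq : 1 ≤ q) (h : x ^ q ≤ C) :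
    x ≤ max 1 C := by
  rcases le_or_gt x 1 with hx1 | hx1
  · exact le_max_of_le_left hx1
  · exact le_max_of_le_right ((self_le_rpow_of_one_le hx1.le hq).trans h)

lemma monotoneOn_of_forall_hasDerivAt_nonneg {D : Set ℝ} (hD : Convex ℝ D) {f f' : ℝ → ℝ}
    (hf : ∀ x ∈ D, HasDerivAt f (f' x) x) (hf' : ∀ x ∈ D, 0 ≤ f' x) : MonotoneOn f D :=
  monotoneOn_of_hasDerivWithinAt_nonneg hD (fun x hx => (hf x hx).continuousAt.continuousWithinAt)
    (fun x hx => (hf x (interior_subset hx)).hasDerivWithinAt)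
    (fun x hx => hf' x (interior_subset hx))

lemma antitoneOn_of_forall_hasDerivAt_nonpos {D : Set ℝ} (hD : Convex ℝ D) {f f' : ℝ → ℝ}
    (hf : ∀ x ∈ D, HasDerivAt f (f' x) x) (hf' : ∀ x ∈ D, f' x ≤ 0) : AntitoneOn f D :=
  antitoneOn_of_hasDerivWithinAt_nonpos hD (fun x hx => (hf x hx).continuousAt.continuousWithinAt)
    (fun x hx => (hf x (interior_subset hx)).hasDerivWithinAt)
    (fun x hx => hf' x (interior_subset hx))

section ZeroCrossing

variable {h : ℝ → ℝ} {a b : ℝ}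

lemma nonneg_of_deriv_pos_of_eq_zero (hd : ∀ x ∈ Icc a b, DifferentiableAt ℝ h x)
    (ha : 0 ≤ h a) (hzero : ∀ x ∈ Icc a b, h x = 0 → 0 < deriv h x) :
    ∀ x ∈ Icc a b, 0 ≤ h x := by
  have hneg : ∀ x ∈ Icc a b, -h x ≤ 0 :=
    image_le_of_deriv_right_lt_deriv_boundary (f := fun x => -h x) (B := fun _ => 0)
      (fun x hx => (hd x hx).continuousAt.neg.continuousWithinAt)
      (fun x hx => (hd x (Ico_subset_Icc_self hx)).hasDerivAt.neg.hasDerivWithinAt)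
      (by simpa using ha) (fun _ => hasDerivAt_const _ _)
      (fun x hx hx0 => by simpa using hzero x (Ico_subset_Icc_self hx) (by simpa using hx0))
  exact fun x hx => neg_nonpos.1 (hneg x hx)

lemma pos_of_deriv_pos_of_eq_zero (hd : ∀ x ∈ Icc a b, DifferentiableAt ℝ h x)
    (ha : 0 ≤ h a) (hzero : ∀ x ∈ Icc a b, h x = 0 → 0 < deriv h x) (hab : a < b) :
    0 < h b := by
  have hnonneg := nonneg_of_deriv_pos_of_eq_zero hd ha hzero
  have hb : b ∈ Icc a b := right_mem_Icc.2 hab.le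
  refine (hnonneg b hb).lt_of_ne fun hb0 => (hzero b hb hb0.symm).not_ge ?_
  -- `h ≥ 0 = h b` to the left of `b`, so every left difference quotient at `b` is `≤ 0`
  refine le_of_tendsto ((hd b hb).hasDerivAt.tendsto_slope_zero_left) ?_
  filter_upwards [Ioo_mem_nhdsLT (sub_neg.2 hab)] with t ht
  rw [← hb0, sub_zero, smul_eq_mul]
  exact mul_nonpos_of_nonpos_of_nonneg (inv_nonpos.2 ht.2.le)
    (hnonneg _ ⟨by linarith [ht.1], by linarith [ht.2]⟩)

end ZeroCrossing

/-- Written through `powLaw n f''` rather than `f''`, since only the former is known to be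
differentiable; `|powLaw n x| ^ (1 + n⁻¹) = |x| ^ (n + 1)`. -/
noncomputable def powLawEnergy (n m : ℝ) (f : ℝ → ℝ) (t : ℝ) : ℝ :=
  |powLaw n (deriv (deriv f) t)| ^ (1 + n⁻¹) / (1 + n⁻¹) - m / 3 * deriv f t ^ 3

namespace SolvesPowerLawODE

variable {n α m : ℝ} {f : ℝ → ℝ} {I : Set ℝ} {t : ℝ}

lemma hasDerivAt_powLaw_deriv2 (hf : SolvesPowerLawODE n α m f I) (ht : t ∈ I) :
    HasDerivAt (fun s => powLaw n (deriv (deriv f) s))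
      (m * deriv f t ^ 2 - α * f t * deriv (deriv f) t) t :=
  (hf.2.2.2.1 t ht).hasDerivAt.congr_deriv (by linarith [hf.2.2.2.2 t ht])

lemma hasDerivAt_flux (hf : SolvesPowerLawODE n α m f I) (ht : t ∈ I) :
    HasDerivAt (fun s => powLaw n (deriv (deriv f) s) + α * (f s * deriv f s))
      ((m + α) * deriv f t ^ 2) t :=
  ((hf.hasDerivAt_powLaw_deriv2 ht).add
    (((hf.1 t ht).hasDerivAt.mul (hf.2.1 t ht).hasDerivAt).const_mul α)).congr_deriv (by ring)

lemma hasDerivAt_powLawEnergy (hf : SolvesPowerLawODE n α m f I) (hn : 0 < n) (ht : t ∈ I) :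
    HasDerivAt (powLawEnergy n m f) (-(α * f t * deriv (deriv f) t ^ 2)) t := by
  have hp : 1 < 1 + n⁻¹ := lt_add_of_pos_right 1 (inv_pos.2 hn)
  have hg := hf.hasDerivAt_powLaw_deriv2 ht
  -- `d/dg (|g|^p / p) = powLaw (p - 1) g` and `p - 1 = n⁻¹` undoes `powLaw n`
  have hinv : |powLaw n (deriv (deriv f) t)| ^ (1 + n⁻¹ - 2) * powLaw n (deriv (deriv f) t)
      = deriv (deriv f) t := by
    rw [show 1 + n⁻¹ - 2 = n⁻¹ - 1 by ring]
    exact powLaw_inv_powLaw hn.ne' _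
  refine ((((hasDerivAt_abs_rpow _ hp).comp t hg).div_const (1 + n⁻¹)).sub
    (((hf.2.1 t ht).hasDerivAt.pow 3).const_mul (m / 3))).congr_deriv ?_
  rw [mul_assoc (1 + n⁻¹), mul_assoc (1 + n⁻¹), mul_div_cancel_left₀ _ (by positivity),
    ← mul_assoc, hinv]
  push_cast
  ring

lemma flux_pos (hf : SolvesPowerLawODE n α m f I) (hI : I.OrdConnected) (hI0 : IsLeast I 0)
    (hmα : 0 ≤ m + α) (hflux : 0 < powLaw n (deriv (deriv f) 0) + α * (f 0 * deriv f 0))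
    (ht : t ∈ I) : 0 < powLaw n (deriv (deriv f) t) + α * (f t * deriv f t) :=
  hflux.trans_le <| monotoneOn_of_forall_hasDerivAt_nonneg hI.convex
    (fun _ hs => hf.hasDerivAt_flux hs) (fun _ _ => by positivity) hI0.1 ht (hI0.2 ht)

lemma deriv2_pos_of_deriv_eq_zero (hf : SolvesPowerLawODE n α m f I) (hI : I.OrdConnected)
    (hI0 : IsLeast I 0) (hmα : 0 ≤ m + α)
    (hflux : 0 < powLaw n (deriv (deriv f) 0) + α * (f 0 * deriv f 0))
    (ht : t ∈ I) (h0 : deriv f t = 0) : 0 < deriv (deriv f) t := by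
  simpa [h0, powLaw_pos_iff] using hf.flux_pos hI hI0 hmα hflux ht

lemma deriv_nonneg (hf : SolvesPowerLawODE n α m f I) (hI : I.OrdConnected) (hI0 : IsLeast I 0)
    (h0 : 0 ≤ deriv f 0) (hzero : ∀ s ∈ I, deriv f s = 0 → 0 < deriv (deriv f) s)
    (ht : t ∈ I) : 0 ≤ deriv f t :=
  nonneg_of_deriv_pos_of_eq_zero (fun s hs => hf.2.1 s (hI.out hI0.1 ht hs)) h0
    (fun s hs => hzero s (hI.out hI0.1 ht hs)) t ⟨hI0.2 ht, le_rfl⟩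

lemma deriv_pos (hf : SolvesPowerLawODE n α m f I) (hI : I.OrdConnected) (hI0 : IsLeast I 0)
    (h0 : 0 ≤ deriv f 0) (hzero : ∀ s ∈ I, deriv f s = 0 → 0 < deriv (deriv f) s)
    (ht : t ∈ I) (ht0 : 0 < t) : 0 < deriv f t :=
  pos_of_deriv_pos_of_eq_zero (fun s hs => hf.2.1 s (hI.out hI0.1 ht hs)) h0
    (fun s hs => hzero s (hI.out hI0.1 ht hs)) ht0

lemma pos_of_deriv_pos (hf : SolvesPowerLawODE n α m f I) (hI : I.OrdConnected) (hI0 : IsLeast I 0)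
    (h0 : 0 ≤ f 0) (hderiv : ∀ s ∈ I, 0 < s → 0 < deriv f s) (ht : t ∈ I) (ht0 : 0 < t) :
    0 < f t := by
  have hsub : Icc 0 t ⊆ I := hI.out hI0.1 ht
  refine h0.trans_lt <| strictMonoOn_of_deriv_pos (convex_Icc 0 t)
    (fun s hs => (hf.1 s (hsub hs)).continuousAt.continuousWithinAt) (fun s hs => ?_)
    (left_mem_Icc.2 ht0.le) (right_mem_Icc.2 ht0.le) ht0
  rw [interior_Icc] at hs
  exact hderiv s (hsub (Ioo_subset_Icc_self hs)) hs.1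

lemma powLawEnergy_le (hf : SolvesPowerLawODE n α m f I) (hI : I.OrdConnected)
    (hI0 : IsLeast I 0) (hα : 0 ≤ α) (hn : 0 < n) (hf0 : ∀ s ∈ I, 0 ≤ f s) (ht : t ∈ I) :
    powLawEnergy n m f t ≤ powLawEnergy n m f 0 :=
  antitoneOn_of_forall_hasDerivAt_nonpos hI.convex (fun _ hs => hf.hasDerivAt_powLawEnergy hn hs)
    (fun s hs => neg_nonpos.2 (by have := hf0 s hs; positivity)) hI0.1 ht (hI0.2 ht)

end SolvesPowerLawODE

section EnergyBounds

variable {n m E t : ℝ} {f : ℝ → ℝ}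

lemma deriv_le_of_powLawEnergy_le (hn : 0 < n) (hm : m < 0)
    (hE : powLawEnergy n m f t ≤ E) : deriv f t ≤ max 1 (3 * E / -m) := by
  refine le_max_one_of_rpow_le (q := (3 : ℕ)) (by norm_num) ?_
  rw [rpow_natCast, le_div_iff₀ (neg_pos.2 hm)]
  have : 0 ≤ |powLaw n (deriv (deriv f) t)| ^ (1 + n⁻¹) / (1 + n⁻¹) := by positivity
  unfold powLawEnergy at hE
  linarith

lemma abs_deriv2_le_of_powLawEnergy_le (hn : 0 < n) (hm : m ≤ 0) (h0 : 0 ≤ deriv f t)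
    (hE : powLawEnergy n m f t ≤ E) : |deriv (deriv f) t| ≤ max 1 ((1 + n⁻¹) * E) := by
  refine le_max_one_of_rpow_le (q := n * (1 + n⁻¹)) (by nlinarith [mul_inv_cancel₀ hn.ne']) ?_
  rw [rpow_mul (abs_nonneg _), ← abs_powLaw hn.ne', ← div_le_iff₀' (by positivity)]
  have : 0 ≤ -m / 3 * deriv f t ^ 3 := by
    have := neg_nonneg.2 hm
    positivity
  unfold powLawEnergy at hE
  linarith

end EnergyBounds

theorem stmt_7 (n α m : ℝ) (hn : 1 < n) (hα : 0 < α) (hm₁ : -α < m) (hm₂ : m < 0)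
    (T : EReal) (hT : 0 < T) (f : ℝ → ℝ) (a b d : ℝ)
    (ha : 0 ≤ a) (hb : 0 ≤ b) (hd : |d| ^ (n - 1) * d > -α * a * b)
    (hf : SolvesPowerLawODE n α m f {t : ℝ | 0 ≤ t ∧ (t : EReal) < T})
    (hf0 : f 0 = a) (hf0' : deriv f 0 = b) (hf0'' : deriv (deriv f) 0 = d) :
    (∀ t : ℝ, 0 < t → (t : EReal) < T → 0 < f t ∧ 0 < deriv f t) ∧
    (∃ C : ℝ, ∀ t : ℝ, 0 ≤ t → (t : EReal) < T → |deriv f t| ≤ C) ∧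
    (∃ C : ℝ, ∀ t : ℝ, 0 ≤ t → (t : EReal) < T → |deriv (deriv f) t| ≤ C) := by
  set I := {t : ℝ | 0 ≤ t ∧ (t : EReal) < T}
  have hI : I.OrdConnected := ⟨fun _ hx _ hy _ hz =>
    ⟨hx.1.trans hz.1, (EReal.coe_le_coe_iff.2 hz.2).trans_lt hy.2⟩⟩
  have hI0 : IsLeast I 0 := ⟨⟨le_rfl, by exact_mod_cast hT⟩, fun _ ht => ht.1⟩
  have hflux : 0 < powLaw n (deriv (deriv f) 0) + α * (f 0 * deriv f 0) := by
    rw [hf0, hf0', hf0'', powLaw]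
    linarith
  have hzero := fun s (hs : s ∈ I) => hf.deriv2_pos_of_deriv_eq_zero hI hI0 (by linarith) hflux hs
  have hf'_nonneg := fun s (hs : s ∈ I) => hf.deriv_nonneg hI hI0 (hf0' ▸ hb) hzero hs
  have hf'_pos := fun s (hs : s ∈ I) => hf.deriv_pos hI hI0 (hf0' ▸ hb) hzero hs
  have hf_pos := fun s (hs : s ∈ I) => hf.pos_of_deriv_pos hI hI0 (hf0 ▸ ha) hf'_pos hs
  have hf_nonneg : ∀ s ∈ I, 0 ≤ f s := fun s hs =>
    (hs.1.eq_or_lt).elim (fun h => h ▸ hf0 ▸ ha) (fun h => (hf_pos s hs h).le)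
  have hE := fun s (hs : s ∈ I) => hf.powLawEnergy_le hI hI0 hα.le (by linarith) hf_nonneg hs
  refine ⟨fun t ht hT => ⟨hf_pos t ⟨ht.le, hT⟩ ht, hf'_pos t ⟨ht.le, hT⟩ ht⟩,
    ⟨max 1 (3 * powLawEnergy n m f 0 / -m), fun t ht hT => ?_⟩, ⟨_, fun t ht hT =>
      abs_deriv2_le_of_powLawEnergy_le (by linarith) hm₂.le (hf'_nonneg t ⟨ht, hT⟩)
        (hE t ⟨ht, hT⟩)⟩⟩
  rw [abs_of_nonneg (hf'_nonneg t ⟨ht, hT⟩)]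
  exact deriv_le_of_powLawEnergy_le (by linarith) hm₂ (hE t ⟨ht, hT⟩)
end

section
/- Assume α > 0. Let f : ℝ → ℝ solve the power-law ODE on [0,∞) with f(t) → ∞ and f''(t) → 0 as t → ∞. Then there exists t₀ ≥ 0 such that |f''(t₀)|^{n−1}·f''(t₀) + α·f(t₀)·f'(t₀) > 0. -/
open Real Set Filter Topology

/-!
Suppose the claim fails, so `powLaw n f'' + α f f' ≤ 0` on `[0, ∞)`. Once `f ≥ 1`, at every time
with `f' > 0` this forces `f'' ≤ -(α f')^(1/n)`. Since `1/n < 1`, the quantity `(f')^(1 - 1/n)`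
then decreases at a rate bounded away from zero, so `f'` reaches `0` in finite time; it can never
become positive again, because it decreases wherever it is positive. Hence `f` is eventually
nonincreasing, contradicting `f → ∞`.
-/

theorem powLaw_nonpos_iff {n c : ℝ} : powLaw n c ≤ 0 ↔ c ≤ 0 := by
  refine ⟨fun h => not_lt.mp fun hc => ?_, fun hc => ?_⟩
  · exact h.not_gt (mul_pos (rpow_pos_of_pos (abs_pos.mpr hc.ne') _) hc)
  · exact mul_nonpos_of_nonneg_of_nonpos (rpow_nonneg (abs_nonneg c) _) hc

theorem powLaw_of_nonpos {n c : ℝ} (hn : n ≠ 0) (hc : c ≤ 0) : powLaw n c = -(-c) ^ n := by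
  have h := rpow_add_one' (neg_nonneg.mpr hc) (show n - 1 + 1 ≠ 0 by simpa using hn)
  rw [sub_add_cancel] at h
  rw [powLaw, abs_of_nonpos hc, h]
  ring

theorem rpow_inv_le_neg_of_powLaw_le_neg {n c y : ℝ} (hn : 0 < n) (hy : 0 ≤ y)
    (h : powLaw n c ≤ -y) : y ^ n⁻¹ ≤ -c := by
  have hc : c ≤ 0 := powLaw_nonpos_iff.mp (h.trans (neg_nonpos.mpr hy))
  rw [powLaw_of_nonpos hn.ne' hc, neg_le_neg_iff] at h
  exact (rpow_inv_le_iff_of_pos hy (neg_nonneg.mpr hc) hn).mpr h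

section FiniteTimeExtinction

variable {g : ℝ → ℝ} {a : ℝ}

theorem nonpos_of_deriv_nonpos_of_pos (hg : ∀ t, a ≤ t → DifferentiableAt ℝ g t)
    (ha : g a ≤ 0) (hdec : ∀ t, a ≤ t → 0 < g t → deriv g t ≤ 0) {t : ℝ} (ht : a ≤ t) :
    g t ≤ 0 := by
  have hcont : ContinuousOn g (Icc a t) := fun s hs => (hg s hs.1).continuousAt.continuousWithinAt
  -- compare with the barriers `ε * (s - a + 1)`, which `g` can only touch while it is positive
  have hbarrier : ∀ ε > 0, g t ≤ ε * (t - a + 1) := by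
    intro ε hε
    refine image_le_of_deriv_right_lt_deriv_boundary' (B := fun s => ε * (s - a + 1)) hcont
      (fun s hs => (hg s hs.1).hasDerivAt.hasDerivWithinAt) (by simpa using ha.trans hε.le)
      (by fun_prop)
      (fun s _ => ((((hasDerivAt_id s).sub_const a).add_const 1).const_mul ε).hasDerivWithinAt)
      (fun s hs hgs => ?_) ⟨ht, le_rfl⟩
    have hpos : 0 < g s := by rw [hgs]; nlinarith [hs.1]
    simpa using (hdec s hs.1 hpos).trans_lt hε
  have hlim : Tendsto (fun ε => ε * (t - a + 1)) (𝓝[>] 0) (𝓝 0) :=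
    tendsto_nhdsWithin_of_tendsto_nhds ((continuous_mul_const _).tendsto' _ _ (zero_mul _))
  exact ge_of_tendsto hlim (eventually_nhdsWithin_of_forall hbarrier)

theorem exists_nonpos_of_deriv_le_neg_rpow {β q : ℝ} (hβ : 0 < β) (hq : q < 1)
    (hg : ∀ t, a ≤ t → DifferentiableAt ℝ g t)
    (hbound : ∀ t, a ≤ t → 0 < g t → deriv g t ≤ -β * g t ^ q) : ∃ b, a ≤ b ∧ g b ≤ 0 := by
  by_contra! hpos
  set p := 1 - q
  have hp : 0 < p := sub_pos.mpr hq
  -- `g ^ (1 - q)` decreases at rate at least `(1 - q) β` but stays nonnegative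
  set φ : ℝ → ℝ := fun s => g s ^ p + p * β * s
  have hφ : ∀ t, a ≤ t → HasDerivAt φ (deriv g t * p * g t ^ (p - 1) + p * β) t := fun t ht =>
    ((hg t ht).hasDerivAt.rpow_const (Or.inl (hpos t ht).ne')).add
      (by simpa using (hasDerivAt_id t).const_mul (p * β))
  have hφ' : ∀ t, a ≤ t → deriv g t * p * g t ^ (p - 1) + p * β ≤ 0 := fun t ht => by
    have hgt := hpos t ht
    have hcancel : g t ^ q * g t ^ (p - 1) = 1 := by
      rw [← rpow_add hgt]; simp [p]
    have h := mul_le_mul_of_nonneg_right (hbound t ht hgt) (rpow_nonneg hgt.le (p - 1))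
    rw [mul_assoc, hcancel, mul_one] at h
    nlinarith [mul_le_mul_of_nonneg_left h hp.le]
  have hanti : AntitoneOn φ (Ici a) := by
    apply antitoneOn_of_deriv_nonpos (convex_Ici a)
    · exact fun t ht => (hφ t ht).continuousAt.continuousWithinAt
    · rw [interior_Ici]
      exact fun t ht => (hφ t ht.le).differentiableAt.differentiableWithinAt
    · rw [interior_Ici]
      exact fun t ht => (hφ t ht.le).deriv ▸ hφ' t ht.le
  set t := a + g a ^ p / (p * β) + 1
  have hat : a ≤ t := by
    have : 0 ≤ g a ^ p / (p * β) := by positivity [(hpos a le_rfl).le]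
    linarith
  have hφt : φ t ≤ φ a := hanti self_mem_Ici hat hat
  have hkey : p * β * t = p * β * a + g a ^ p + p * β := by
    simp only [t]; field_simp
  have : 0 ≤ g t ^ p := rpow_nonneg (hpos t hat).le p
  simp only [φ] at hφt
  nlinarith [mul_pos hp hβ]

theorem eventually_nonpos_of_deriv_le_neg_rpow {β q : ℝ} (hβ : 0 < β) (hq : q < 1)
    (hg : ∀ t, a ≤ t → DifferentiableAt ℝ g t)
    (hbound : ∀ t, a ≤ t → 0 < g t → deriv g t ≤ -β * g t ^ q) : ∀ᶠ t in atTop, g t ≤ 0 := by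
  obtain ⟨b, hab, hgb⟩ := exists_nonpos_of_deriv_le_neg_rpow hβ hq hg hbound
  filter_upwards [eventually_ge_atTop b] with t hbt
  refine nonpos_of_deriv_nonpos_of_pos (fun s hs => hg s (hab.trans hs)) hgb (fun s hs hgs => ?_) hbt
  exact (hbound s (hab.trans hs) hgs).trans
    (mul_nonpos_of_nonpos_of_nonneg (neg_nonpos.mpr hβ.le) (rpow_nonneg hgs.le q))

end FiniteTimeExtinction

theorem not_tendsto_atTop_of_deriv_nonpos {f : ℝ → ℝ}
    (hf : ∀ᶠ t in atTop, DifferentiableAt ℝ f t) (hf' : ∀ᶠ t in atTop, deriv f t ≤ 0) :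
    ¬Tendsto f atTop atTop := by
  intro hlim
  obtain ⟨b, hb⟩ := (hf.and hf').exists_forall_of_atTop
  have hanti : AntitoneOn f (Ici b) := by
    apply antitoneOn_of_deriv_nonpos (convex_Ici b)
    · exact fun t ht => (hb t ht).1.continuousAt.continuousWithinAt
    · rw [interior_Ici]
      exact fun t ht => (hb t ht.le).1.differentiableWithinAt
    · rw [interior_Ici]
      exact fun t ht => (hb t ht.le).2
  obtain ⟨t, hbt, hft⟩ := ((eventually_ge_atTop b).and (hlim.eventually_gt_atTop (f b))).exists
  exact (hanti self_mem_Ici hbt hbt).not_gt hft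

theorem stmt_14_general (n α m : ℝ) (hn : 1 < n) (hα : 0 < α)
    (f : ℝ → ℝ)
    (hf : SolvesPowerLawODE n α m f (Set.Ici 0))
    (hinf : Filter.Tendsto f Filter.atTop Filter.atTop) :
    ∃ t₀ : ℝ, 0 ≤ t₀ ∧
      0 < powLaw n (deriv (deriv f) t₀) + α * f t₀ * deriv f t₀ := by
  by_contra! hneg
  obtain ⟨hf₁, hf₂, -⟩ := hf
  obtain ⟨T, hT⟩ :=
    ((eventually_ge_atTop 0).and (hinf.eventually_ge_atTop 1)).exists_forall_of_atTop
  have hdecay : ∀ t, T ≤ t → 0 < deriv f t →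
      deriv (deriv f) t ≤ -α ^ n⁻¹ * deriv f t ^ n⁻¹ := by
    intro t hTt hf't
    obtain ⟨ht, hft⟩ := hT t hTt
    have hle : powLaw n (deriv (deriv f) t) ≤ -(α * deriv f t) := by
      nlinarith [hneg t ht, mul_pos hα hf't]
    have := rpow_inv_le_neg_of_powLaw_le_neg (one_pos.trans hn) (by positivity) hle
    rw [mul_rpow hα.le hf't.le] at this
    linarith
  have hf'_nonpos : ∀ᶠ t in atTop, deriv f t ≤ 0 :=
    eventually_nonpos_of_deriv_le_neg_rpow (rpow_pos_of_pos hα _) (inv_lt_one_of_one_lt₀ hn)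
      (fun t hTt => hf₂ t (hT t hTt).1) hdecay
  exact not_tendsto_atTop_of_deriv_nonpos ((eventually_ge_atTop 0).mono hf₁) hf'_nonpos hinf

theorem stmt_14 (n α m : ℝ) (hn : 1 < n) (hα : 0 < α)
    (f : ℝ → ℝ)
    (hf : SolvesPowerLawODE n α m f (Set.Ici 0))
    (hinf : Filter.Tendsto f Filter.atTop Filter.atTop)
    (hd0' : Filter.Tendsto (deriv (deriv f)) Filter.atTop (nhds 0)) :
    ∃ t₀ : ℝ, 0 ≤ t₀ ∧
      0 < powLaw n (deriv (deriv f) t₀) + α * f t₀ * deriv f t₀ :=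
  stmt_14_general n α m hn hα f hf hinf
end
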